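/- arXiv:0801.3762 — 2 statements merged into one kernel-verified Lean document; each statement's English description precedes it below -/
import Mathlib

section
/- The number of triangulations of a convex polygon with n+2 vertices equals the n-th Catalan number C(n) = (2n)! / ((n+1)! · n!). -/
namespace CTA

/-- `x` lies strictly between `a` and `b` going anticlockwise around the `m`-gon. -/
def Btw (m : ℕ) (a x b : ZMod m) : Prop :=
  0 < (x - a).val ∧ (x - a).val < (b - a).val

/-- `p` is a diagonal of the convex `m`-gon: its endpoints are distinct and non-adjacent. -/
def IsPolyDiag (m : ℕ) (p : Sym2 (ZMod m)) : Prop :=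
  ∀ a b : ZMod m, p = s(a, b) → 2 ≤ (b - a).val ∧ 2 ≤ (a - b).val

/-- Two diagonals cross (intersect in an interior point of both). -/
def Crosses (m : ℕ) (p q : Sym2 (ZMod m)) : Prop :=
  ∃ a b c d : ZMod m, p = s(a, b) ∧ q = s(c, d) ∧ Btw m a c b ∧ Btw m b d a

/-- A triangulation: a maximal set of pairwise non-crossing diagonals. -/
def IsTriangulation (m : ℕ) (Δ : Set (Sym2 (ZMod m))) : Prop :=
  (∀ p ∈ Δ, IsPolyDiag m p) ∧
  (∀ p ∈ Δ, ∀ q ∈ Δ, ¬ Crosses m p q) ∧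
  ∀ Δ' : Set (Sym2 (ZMod m)), Δ ⊆ Δ' → (∀ p ∈ Δ', IsPolyDiag m p) →
    (∀ p ∈ Δ', ∀ q ∈ Δ', ¬ Crosses m p q) → Δ' = Δ

/-- A diagonal is close to the border if its endpoints are at boundary distance exactly 2. -/
def CloseBorder (m : ℕ) (p : Sym2 (ZMod m)) : Prop :=
  ∃ a b : ZMod m, p = s(a, b) ∧ min (b - a).val (a - b).val = 2

/-- Rotation of a triangulation by `k` vertices. -/
def rotate (m : ℕ) (k : ZMod m) (Δ : Set (Sym2 (ZMod m))) : Set (Sym2 (ZMod m)) :=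
  Sym2.map (· + k) '' Δ

/-- The orbit of a triangulation under the rotation action of `ZMod m`. -/
def rotOrbit (m : ℕ) (Δ : Set (Sym2 (ZMod m))) : Set (Set (Sym2 (ZMod m))) :=
  {Δ' | ∃ k : ZMod m, Δ' = rotate m k Δ}

/-- The number of orbits of the rotation action on triangulations of the `m`-gon. -/
noncomputable def numOrbits (m : ℕ) : ℕ :=
  Nat.card {O : Set (Set (Sym2 (ZMod m))) // ∃ Δ, IsTriangulation m Δ ∧ O = rotOrbit m Δ}

/-- The `n`-th Catalan number `(2n)!/((n+1)!·n!)`. -/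
def catalanC (n : ℕ) : ℕ :=
  Nat.factorial (2 * n) / (Nat.factorial (n + 1) * Nat.factorial n)

/-- The diagonal close to the border cutting off the vertex `v`. -/
def cutDiag (m : ℕ) (v : ZMod m) : Sym2 (ZMod m) := s(v - 1, v + 1)

/-- Deleting the vertex `v` from the `(m+1)`-gon: the order-preserving relabelling of the
remaining vertices by `ZMod m`. -/
def delVtx (m : ℕ) (v : ZMod (m + 1)) (x : ZMod (m + 1)) : ZMod m :=
  if x.val < v.val then (x.val : ZMod m) else ((x.val - 1 : ℕ) : ZMod m)

/-- Inserting a new vertex on the border edge between `a` and `a+1`: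
the induced relabelling of old vertices into `ZMod (m+1)`. -/
def insVtx (m : ℕ) (a : ZMod m) (x : ZMod m) : ZMod (m + 1) :=
  if x.val ≤ a.val then (x.val : ZMod (m + 1)) else ((x.val + 1 : ℕ) : ZMod (m + 1))

/-- Factoring out the close-to-the-border diagonal cutting off the vertex `v`:
the diagonal becomes a border edge of the smaller polygon, all other diagonals unchanged. -/
def contract (m : ℕ) (v : ZMod (m + 1)) (Δ : Set (Sym2 (ZMod (m + 1)))) :
    Set (Sym2 (ZMod m)) :=
  Sym2.map (delVtx m v) '' (Δ \ {cutDiag (m + 1) v})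

/-- An edge of the triangulated polygon: a diagonal of `Δ` or a border edge. -/
def IsEdge (m : ℕ) (Δ : Set (Sym2 (ZMod m))) (p : Sym2 (ZMod m)) : Prop :=
  p ∈ Δ ∨ ∃ a : ZMod m, p = s(a, a + 1)

/-- The arrow relation of the quiver `Q_Δ`: an arrow `p → q` when the diagonals `p` and `q`
bound a common triangle of `Δ` and `q` is obtained from `p` by anticlockwise rotation about
their common endpoint. -/
def Arrow (m : ℕ) (Δ : Set (Sym2 (ZMod m))) (p q : Sym2 (ZMod m)) : Prop :=
  p ∈ Δ ∧ q ∈ Δ ∧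
    ∃ a b c : ZMod m, p = s(a, b) ∧ q = s(a, c) ∧ IsEdge m Δ s(b, c) ∧ Btw m b c a

/-- Fomin–Zelevinsky mutation of an arrow relation (quiver with no loops, no 2-cycles and
no multiple arrows) at the vertex `k`. -/
def mutArrow (m : ℕ) (A : Sym2 (ZMod m) → Sym2 (ZMod m) → Prop) (k p q : Sym2 (ZMod m)) :
    Prop :=
  (p = k ∧ A q k) ∨
  (p ≠ k ∧ q = k ∧ A k p) ∨
  (p ≠ k ∧ q ≠ k ∧
    ((A p k ∧ A k q ∧ ¬ A q p) ∨ (A p q ∧ ¬ (A q k ∧ A k p))))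

/-!
The triangle of a triangulation `Δ` of the `m`-gon (`m ≥ 3`) on the border edge `{m - 1, 0}` has a
unique apex `k`. Its sides `s(0, k)` and `s(k, m - 1)` cut the polygon into the `(k + 1)`-gon on the
vertices `0, …, k` and the `(m - k)`-gon on `k, …, m - 1`, and the diagonals of `Δ` other than these
sides are exactly those of a triangulation of either piece. Conversely, any pair of triangulations
of the two pieces glues, together with the two sides, to a triangulation with apex `k`. Hence the
numbers `T(m)` of triangulations satisfy `T(n + 3) = ∑_{j ≤ n} T(j + 2) T(n - j + 2)` and
`T(2) = 1`, the recursion of the Catalan numbers.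

Statements about the cyclic order reduce to linear arithmetic on the representatives
`x.val ∈ [0, m)`.
-/

variable {m : ℕ}

theorem crosses_mk_iff {a b c d : ZMod m} :
    Crosses m s(a, b) s(c, d) ↔
      Btw m a c b ∧ Btw m b d a ∨ Btw m a d b ∧ Btw m b c a := by
  constructor
  · rintro ⟨a', b', c', d', hab, hcd, h₁, h₂⟩
    rcases Sym2.eq_iff.mp hab with ⟨rfl, rfl⟩ | ⟨rfl, rfl⟩ <;>
      rcases Sym2.eq_iff.mp hcd with ⟨rfl, rfl⟩ | ⟨rfl, rfl⟩ <;> tauto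
  · rintro (⟨h₁, h₂⟩ | ⟨h₁, h₂⟩)
    · exact ⟨a, b, c, d, rfl, rfl, h₁, h₂⟩
    · exact ⟨a, b, d, c, rfl, Sym2.eq_swap, h₁, h₂⟩

section Values

variable [NeZero m]

theorem val_sub_eq_ite (x y : ZMod m) :
    (y - x).val = if x.val ≤ y.val then y.val - x.val else y.val + m - x.val := by
  split_ifs with h
  · exact ZMod.val_sub h
  · have hx := x.val_lt
    have hxy : y - x = ((y.val + m - x.val : ℕ) : ZMod m) := by
      rw [Nat.cast_sub (by omega), Nat.cast_add, ZMod.natCast_self, add_zero,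
        ZMod.natCast_zmod_val, ZMod.natCast_zmod_val]
    rw [hxy, ZMod.val_natCast_of_lt (by omega)]

theorem btw_iff {a x b : ZMod m} :
    Btw m a x b ↔ a.val < x.val ∧ x.val < b.val ∨
      b.val < a.val ∧ (a.val < x.val ∨ x.val < b.val) := by
  have := a.val_lt; have := x.val_lt; have := b.val_lt
  simp only [Btw, val_sub_eq_ite]
  split_ifs <;> omega

theorem isPolyDiag_mk_iff {a b : ZMod m} :
    IsPolyDiag m s(a, b) ↔ a.val + 2 ≤ b.val ∧ b.val + 2 ≤ a.val + m ∨
      b.val + 2 ≤ a.val ∧ a.val + 2 ≤ b.val + m := by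
  have key : 2 ≤ (b - a).val ∧ 2 ≤ (a - b).val ↔ a.val + 2 ≤ b.val ∧ b.val + 2 ≤ a.val + m ∨
      b.val + 2 ≤ a.val ∧ a.val + 2 ≤ b.val + m := by
    have := a.val_lt; have := b.val_lt
    simp only [val_sub_eq_ite]
    split_ifs <;> omega
  refine ⟨fun h ↦ key.mp (h a b rfl), fun h c d hcd ↦ ?_⟩
  rcases Sym2.eq_iff.mp hcd with ⟨rfl, rfl⟩ | ⟨rfl, rfl⟩
  · exact key.mpr h
  · exact (key.mpr h).symm

theorem Crosses.symm {p q : Sym2 (ZMod m)} (h : Crosses m p q) : Crosses m q p := by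
  induction p using Sym2.ind with | _ a b =>
  induction q using Sym2.ind with | _ c d =>
  have := a.val_lt; have := b.val_lt; have := c.val_lt; have := d.val_lt
  simp only [crosses_mk_iff, btw_iff] at h ⊢
  omega

theorem not_crosses_self (p : Sym2 (ZMod m)) : ¬ Crosses m p p := by
  induction p using Sym2.ind with | _ a b =>
  simp only [crosses_mk_iff, btw_iff]
  omega

theorem Crosses.isPolyDiag_left {p q : Sym2 (ZMod m)} (h : Crosses m p q) : IsPolyDiag m p := by
  induction p using Sym2.ind with | _ a b =>
  induction q using Sym2.ind with | _ c d =>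
  have := a.val_lt; have := b.val_lt; have := c.val_lt; have := d.val_lt
  simp only [crosses_mk_iff, btw_iff] at h
  rw [isPolyDiag_mk_iff]
  omega

theorem isTriangulation_iff {Δ : Set (Sym2 (ZMod m))} :
    IsTriangulation m Δ ↔ (∀ p ∈ Δ, IsPolyDiag m p) ∧ (∀ p ∈ Δ, ∀ q ∈ Δ, ¬ Crosses m p q) ∧
      ∀ q, IsPolyDiag m q → (∀ p ∈ Δ, ¬ Crosses m q p) → q ∈ Δ := by
  refine ⟨fun ⟨hdiag, hcross, hmax⟩ ↦ ⟨hdiag, hcross, fun q hq hfree ↦ ?_⟩,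
    fun ⟨hdiag, hcross, hmax⟩ ↦ ⟨hdiag, hcross, fun Δ' hsub hdiag' hcross' ↦ ?_⟩⟩
  · have hins : insert q Δ = Δ := by
      refine hmax _ (Set.subset_insert q Δ) (Set.forall_mem_insert.mpr ⟨hq, hdiag⟩) ?_
      rintro p (rfl | hp) p' (rfl | hp')
      exacts [not_crosses_self _, hfree p' hp', fun h ↦ hfree p hp h.symm, hcross p hp p' hp']
    exact hins ▸ Set.mem_insert q Δ
  · refine (Set.Subset.antisymm hsub fun q hq ↦ ?_).symm
    exact hmax q (hdiag' q hq) fun p hp ↦ hcross' q hq p (hsub hp)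

theorem not_crosses_of_imp_mem {c q : Sym2 (ZMod m)} {Δ : Set (Sym2 (ZMod m))}
    (hc : IsPolyDiag m c → c ∈ Δ)
    (hq : ∀ p ∈ Δ, ¬ Crosses m p q) : ¬ Crosses m c q :=
  fun hcq ↦ hq c (hc hcq.isPolyDiag_left) hcq

end Values

/-- The vertices `s, s + 1, …, s + ℓ` of the `m`-gon (`s + ℓ < m`), relabelled `0, …, ℓ`: they
span a convex `(ℓ + 1)`-gon whose border consists of border edges of the `m`-gon and of
`arcChord m s ℓ`. -/
def arcEmb (m s ℓ : ℕ) (x : ZMod (ℓ + 1)) : ZMod m := ((s + x.val : ℕ) : ZMod m)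

def closingEdge (ℓ : ℕ) : Sym2 (ZMod (ℓ + 1)) := s(0, (ℓ : ZMod (ℓ + 1)))

def arcChord (m s ℓ : ℕ) : Sym2 (ZMod m) := (closingEdge ℓ).map (arcEmb m s ℓ)

def InArc (s ℓ : ℕ) (p : Sym2 (ZMod m)) : Prop := ∀ x ∈ p, s ≤ x.val ∧ x.val ≤ s + ℓ

def AvoidsArc (s ℓ : ℕ) (p : Sym2 (ZMod m)) : Prop := ∀ x ∈ p, x.val ≤ s ∨ s + ℓ ≤ x.val

def restrictArc (m s ℓ : ℕ) (Δ : Set (Sym2 (ZMod m))) : Set (Sym2 (ZMod (ℓ + 1))) :=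
  {q | IsPolyDiag (ℓ + 1) q ∧ q.map (arcEmb m s ℓ) ∈ Δ}

def liftArc (m s ℓ : ℕ) (Δ₀ : Set (Sym2 (ZMod (ℓ + 1)))) : Set (Sym2 (ZMod m)) :=
  Sym2.map (arcEmb m s ℓ) '' Δ₀ ∪ {c | c = arcChord m s ℓ ∧ IsPolyDiag m c}

section Arc

variable {s ℓ : ℕ} {Δ : Set (Sym2 (ZMod m))} {Δ₀ : Set (Sym2 (ZMod (ℓ + 1)))}

theorem val_arcEmb (h : s + ℓ < m) (x : ZMod (ℓ + 1)) : (arcEmb m s ℓ x).val = s + x.val :=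
  ZMod.val_natCast_of_lt (by have := x.val_lt; omega)

theorem arcEmb_injective (h : s + ℓ < m) : Function.Injective (arcEmb m s ℓ) := fun x y hxy ↦
  ZMod.val_injective _ (by simpa [val_arcEmb h] using congrArg ZMod.val hxy)

theorem inArc_map_arcEmb (h : s + ℓ < m) (q : Sym2 (ZMod (ℓ + 1))) :
    InArc s ℓ (q.map (arcEmb m s ℓ)) := by
  intro x hx
  obtain ⟨y, -, rfl⟩ := Sym2.mem_map.mp hx
  have := y.val_lt
  rw [val_arcEmb h]
  omega

theorem not_isPolyDiag_closingEdge : ¬ IsPolyDiag (ℓ + 1) (closingEdge ℓ) := by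
  rw [closingEdge, isPolyDiag_mk_iff, ZMod.val_zero, ZMod.val_natCast_of_lt (Nat.lt_succ_self ℓ)]
  omega

theorem arcChord_eq_mk (h : s + ℓ < m) :
    ∃ a b : ZMod m, arcChord m s ℓ = s(a, b) ∧ a.val = s ∧ b.val = s + ℓ :=
  ⟨_, _, Sym2.map_mk .., by rw [val_arcEmb h, ZMod.val_zero, add_zero],
    by rw [val_arcEmb h, ZMod.val_natCast_of_lt (Nat.lt_succ_self ℓ)]⟩

theorem avoidsArc_of_inArc {s t ℓ' : ℕ} {p : Sym2 (ZMod m)} (hp : InArc t ℓ' p)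
    (hst : t + ℓ' ≤ s ∨ s + ℓ ≤ t) : AvoidsArc s ℓ p := fun x hx ↦ by
  have := hp x hx
  omega

theorem exists_mem_of_mem_liftArc
    {p : Sym2 (ZMod m)} (hp : p ∈ liftArc m s ℓ Δ₀) :
    ∃ q, (q ∈ Δ₀ ∨ q = closingEdge ℓ) ∧ q.map (arcEmb m s ℓ) = p := by
  rcases hp with ⟨q, hq, rfl⟩ | ⟨rfl, -⟩
  exacts [⟨q, Or.inl hq, rfl⟩, ⟨_, Or.inr rfl, rfl⟩]

theorem inArc_of_mem_liftArc (h : s + ℓ < m)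
    {p : Sym2 (ZMod m)} (hp : p ∈ liftArc m s ℓ Δ₀) : InArc s ℓ p := by
  obtain ⟨q, -, rfl⟩ := exists_mem_of_mem_liftArc hp
  exact inArc_map_arcEmb h q

theorem liftArc_restrictArc_subset
    (hchord : IsPolyDiag m (arcChord m s ℓ) → arcChord m s ℓ ∈ Δ) :
    liftArc m s ℓ (restrictArc m s ℓ Δ) ⊆ Δ := by
  rintro p (⟨q, ⟨-, hq⟩, rfl⟩ | ⟨rfl, hp⟩)
  exacts [hq, hchord hp]

variable [NeZero m]

theorem isPolyDiag_arcChord_iff (h : s + ℓ < m) :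
    IsPolyDiag m (arcChord m s ℓ) ↔ 2 ≤ ℓ ∧ ℓ + 2 ≤ m := by
  obtain ⟨a, b, hab, ha, hb⟩ := arcChord_eq_mk h
  rw [hab, isPolyDiag_mk_iff]
  omega

theorem btw_arcEmb (h : s + ℓ < m) {x y z : ZMod (ℓ + 1)} :
    Btw m (arcEmb m s ℓ x) (arcEmb m s ℓ z) (arcEmb m s ℓ y) ↔ Btw (ℓ + 1) x z y := by
  simp only [btw_iff, val_arcEmb h]
  omega

theorem crosses_map_arcEmb (h : s + ℓ < m) {p q : Sym2 (ZMod (ℓ + 1))} :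
    Crosses m (p.map (arcEmb m s ℓ)) (q.map (arcEmb m s ℓ)) ↔ Crosses (ℓ + 1) p q := by
  induction p using Sym2.ind with | _ a b =>
  induction q using Sym2.ind with | _ c d =>
  simp only [Sym2.map_mk, crosses_mk_iff, btw_arcEmb h]

theorem isPolyDiag_map_arcEmb (h : s + ℓ < m) {q : Sym2 (ZMod (ℓ + 1))}
    (hq : IsPolyDiag (ℓ + 1) q) : IsPolyDiag m (q.map (arcEmb m s ℓ)) := by
  induction q using Sym2.ind with | _ x y =>
  have := x.val_lt; have := y.val_lt
  rw [isPolyDiag_mk_iff] at hq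
  rw [Sym2.map_mk, isPolyDiag_mk_iff, val_arcEmb h, val_arcEmb h]
  omega

theorem isPolyDiag_of_map_arcEmb (h : s + ℓ < m) {q : Sym2 (ZMod (ℓ + 1))}
    (hq : IsPolyDiag m (q.map (arcEmb m s ℓ))) (hne : q ≠ closingEdge ℓ) :
    IsPolyDiag (ℓ + 1) q := by
  induction q using Sym2.ind with | _ x y =>
  have hends : ∀ {x y : ZMod (ℓ + 1)}, x.val = 0 → y.val = ℓ → s(x, y) = closingEdge ℓ :=
    fun hx hy ↦ by
      rw [closingEdge, (ZMod.val_eq_zero _).mp hx,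
        ZMod.val_injective _ (hy.trans (ZMod.val_natCast_of_lt (Nat.lt_succ_self ℓ)).symm)]
  have := x.val_lt; have := y.val_lt
  have hxy : ¬ (x.val = 0 ∧ y.val = ℓ) := fun ⟨hx, hy⟩ ↦ hne (hends hx hy)
  have hyx : ¬ (y.val = 0 ∧ x.val = ℓ) := fun ⟨hy, hx⟩ ↦ hne (Sym2.eq_swap.trans (hends hy hx))
  rw [Sym2.map_mk, isPolyDiag_mk_iff, val_arcEmb h, val_arcEmb h] at hq
  rw [isPolyDiag_mk_iff]
  omega

theorem exists_map_arcEmb_eq {p : Sym2 (ZMod m)} (hp : InArc s ℓ p) :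
    ∃ q : Sym2 (ZMod (ℓ + 1)), q.map (arcEmb m s ℓ) = p := by
  have hpre : ∀ x : ZMod m, s ≤ x.val ∧ x.val ≤ s + ℓ → arcEmb m s ℓ (x.val - s : ℕ) = x := by
    rintro x ⟨hs, hl⟩
    rw [arcEmb, ZMod.val_natCast_of_lt (by omega), Nat.add_sub_cancel' hs,
      ZMod.natCast_zmod_val]
  induction p using Sym2.ind with | _ a b =>
  rw [InArc, Sym2.forall_mem_pair] at hp
  exact ⟨s((a.val - s : ℕ), (b.val - s : ℕ)), by rw [Sym2.map_mk, hpre a hp.1, hpre b hp.2]⟩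

theorem eq_arcChord_or_exists_map_arcEmb_eq (h : s + ℓ < m) {p : Sym2 (ZMod m)}
    (hp : IsPolyDiag m p) (harc : InArc s ℓ p) :
    p = arcChord m s ℓ ∨ ∃ q, IsPolyDiag (ℓ + 1) q ∧ q.map (arcEmb m s ℓ) = p := by
  obtain ⟨q, rfl⟩ := exists_map_arcEmb_eq harc
  by_cases hq : q = closingEdge ℓ
  · exact Or.inl (by rw [hq, arcChord])
  · exact Or.inr ⟨q, isPolyDiag_of_map_arcEmb h hp hq, rfl⟩

theorem not_isPolyDiag_of_inArc_of_inArc {s t ℓ' : ℕ} (hst : s + ℓ ≤ t) {p : Sym2 (ZMod m)}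
    (hp : InArc s ℓ p) (hp' : InArc t ℓ' p) : ¬ IsPolyDiag m p := by
  induction p using Sym2.ind with | _ a b =>
  rw [InArc, Sym2.forall_mem_pair] at hp hp'
  rw [isPolyDiag_mk_iff]
  omega

theorem not_crosses_of_inArc_of_avoidsArc {p q : Sym2 (ZMod m)} (hp : InArc s ℓ p)
    (hq : AvoidsArc s ℓ q) : ¬ Crosses m p q := by
  induction p using Sym2.ind with | _ a b =>
  induction q using Sym2.ind with | _ c d =>
  rw [InArc, Sym2.forall_mem_pair] at hp
  rw [AvoidsArc, Sym2.forall_mem_pair] at hq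
  simp only [crosses_mk_iff, btw_iff]
  omega

theorem inArc_or_avoidsArc (h : s + ℓ < m) {p : Sym2 (ZMod m)}
    (hp : ¬ Crosses m (arcChord m s ℓ) p) : InArc s ℓ p ∨ AvoidsArc s ℓ p := by
  induction p using Sym2.ind with | _ c d =>
  obtain ⟨a, b, hab, ha, hb⟩ := arcChord_eq_mk h
  rw [InArc, AvoidsArc, Sym2.forall_mem_pair, Sym2.forall_mem_pair]
  rw [hab, crosses_mk_iff] at hp
  simp only [btw_iff] at hp
  have := c.val_lt; have := d.val_lt
  omega

theorem isTriangulation_restrictArc (h : s + ℓ < m)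
    (hΔ : IsTriangulation m Δ) (hchord : ∀ p ∈ Δ, ¬ Crosses m (arcChord m s ℓ) p) :
    IsTriangulation (ℓ + 1) (restrictArc m s ℓ Δ) := by
  obtain ⟨hdiag, hcross, hmax⟩ := isTriangulation_iff.mp hΔ
  refine isTriangulation_iff.mpr ⟨fun q hq ↦ hq.1,
    fun q hq r hr hqr ↦ hcross _ hq.2 _ hr.2 ((crosses_map_arcEmb h).mpr hqr),
    fun q hq hfree ↦ ⟨hq, hmax _ (isPolyDiag_map_arcEmb h hq) fun p hp hqp ↦ ?_⟩⟩
  rcases inArc_or_avoidsArc h (hchord p hp) with harc | havoid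
  · rcases eq_arcChord_or_exists_map_arcEmb_eq h (hdiag p hp) harc with rfl | ⟨r, hr, rfl⟩
    · exact not_isPolyDiag_closingEdge ((crosses_map_arcEmb h).mp hqp).symm.isPolyDiag_left
    · exact hfree r ⟨hr, hp⟩ ((crosses_map_arcEmb h).mp hqp)
  · exact not_crosses_of_inArc_of_avoidsArc (inArc_map_arcEmb h q) havoid hqp

theorem isPolyDiag_of_mem_liftArc (h : s + ℓ < m)
    (hΔ₀ : ∀ q ∈ Δ₀, IsPolyDiag (ℓ + 1) q) {p : Sym2 (ZMod m)} (hp : p ∈ liftArc m s ℓ Δ₀) :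
    IsPolyDiag m p := by
  rcases hp with ⟨q, hq, rfl⟩ | ⟨-, hp⟩
  exacts [isPolyDiag_map_arcEmb h (hΔ₀ q hq), hp]

theorem not_crosses_of_mem_liftArc (h : s + ℓ < m)
    (hΔ₀ : ∀ q ∈ Δ₀, ∀ r ∈ Δ₀, ¬ Crosses (ℓ + 1) q r) {p p' : Sym2 (ZMod m)}
    (hp : p ∈ liftArc m s ℓ Δ₀) (hp' : p' ∈ liftArc m s ℓ Δ₀) : ¬ Crosses m p p' := by
  obtain ⟨q, hq, rfl⟩ := exists_mem_of_mem_liftArc hp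
  obtain ⟨q', hq', rfl⟩ := exists_mem_of_mem_liftArc hp'
  rw [crosses_map_arcEmb h]
  intro hqq'
  rcases hq with hq | rfl
  · rcases hq' with hq' | rfl
    · exact hΔ₀ q hq q' hq' hqq'
    · exact not_isPolyDiag_closingEdge hqq'.symm.isPolyDiag_left
  · exact not_isPolyDiag_closingEdge hqq'.isPolyDiag_left

theorem restrictArc_liftArc_union (h : s + ℓ < m)
    (hΔ₀ : ∀ q ∈ Δ₀, IsPolyDiag (ℓ + 1) q) {B : Set (Sym2 (ZMod m))}
    (hB : ∀ p ∈ B, IsPolyDiag m p → ¬ InArc s ℓ p) :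
    restrictArc m s ℓ (liftArc m s ℓ Δ₀ ∪ B) = Δ₀ := by
  ext q
  refine ⟨fun ⟨hq, hmem⟩ ↦ ?_, fun hq ↦ ⟨hΔ₀ q hq, Or.inl (Or.inl ⟨q, hq, rfl⟩)⟩⟩
  rcases hmem with (⟨r, hr, hrq⟩ | ⟨hchord, -⟩) | hB'
  · rwa [← Sym2.map.injective (arcEmb_injective h) hrq]
  · exact absurd (Sym2.map.injective (arcEmb_injective h) hchord ▸ hq) not_isPolyDiag_closingEdge
  · exact absurd (inArc_map_arcEmb h q) (hB _ hB' (isPolyDiag_map_arcEmb h hq))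

theorem mem_liftArc_restrictArc (h : s + ℓ < m) {p : Sym2 (ZMod m)}
    (hp : p ∈ Δ) (hdiag : IsPolyDiag m p) (harc : InArc s ℓ p) :
    p ∈ liftArc m s ℓ (restrictArc m s ℓ Δ) := by
  rcases eq_arcChord_or_exists_map_arcEmb_eq h hdiag harc with rfl | ⟨q, hq, rfl⟩
  exacts [Or.inr ⟨rfl, hdiag⟩, Or.inl ⟨q, ⟨hq, hp⟩, rfl⟩]

theorem mem_liftArc_of_forall_not_crosses (h : s + ℓ < m)
    (hΔ₀ : IsTriangulation (ℓ + 1) Δ₀) {p : Sym2 (ZMod m)} (hdiag : IsPolyDiag m p)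
    (harc : InArc s ℓ p) (hfree : ∀ p' ∈ liftArc m s ℓ Δ₀, ¬ Crosses m p p') :
    p ∈ liftArc m s ℓ Δ₀ := by
  rcases eq_arcChord_or_exists_map_arcEmb_eq h hdiag harc with rfl | ⟨q, hq, rfl⟩
  · exact Or.inr ⟨rfl, hdiag⟩
  · refine Or.inl ⟨q, (isTriangulation_iff.mp hΔ₀).2.2 q hq fun r hr hqr ↦ ?_, rfl⟩
    exact hfree _ (Or.inl ⟨r, hr, rfl⟩) ((crosses_map_arcEmb h).mpr hqr)

end Arc

/-- For `k + ℓ + 1 = m`: the triangle with vertices `0, k, m - 1` belongs to `Δ`, i.e. those of its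
sides `s(0, k)`, `s(k, m - 1)` that are diagonals lie in `Δ`. -/
def IsApex (m k ℓ : ℕ) (Δ : Set (Sym2 (ZMod m))) : Prop :=
  (IsPolyDiag m (arcChord m 0 k) → arcChord m 0 k ∈ Δ) ∧
    (IsPolyDiag m (arcChord m k ℓ) → arcChord m k ℓ ∈ Δ)

section Apex

variable {k ℓ : ℕ} {Δ : Set (Sym2 (ZMod m))} {Δ₁ : Set (Sym2 (ZMod (k + 1)))}
  {Δ₂ : Set (Sym2 (ZMod (ℓ + 1)))}

theorem isApex_liftArc_union : IsApex m k ℓ (liftArc m 0 k Δ₁ ∪ liftArc m k ℓ Δ₂) :=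
  ⟨fun hc ↦ Or.inl (Or.inr ⟨rfl, hc⟩), fun hc ↦ Or.inr (Or.inr ⟨rfl, hc⟩)⟩

variable [NeZero m]

theorem inArc_or_inArc (hs : k + ℓ + 1 = m) {p : Sym2 (ZMod m)} (hp : IsPolyDiag m p)
    (h₁ : ¬ Crosses m (arcChord m 0 k) p) (h₂ : ¬ Crosses m (arcChord m k ℓ) p) :
    InArc 0 k p ∨ InArc k ℓ p := by
  rcases inArc_or_avoidsArc (by omega) h₁ with h₁ | h₁
  · exact Or.inl h₁
  rcases inArc_or_avoidsArc (by omega) h₂ with h₂ | h₂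
  · exact Or.inr h₂
  induction p using Sym2.ind with | _ a b =>
  rw [AvoidsArc, Sym2.forall_mem_pair] at h₁ h₂
  rw [InArc, InArc, Sym2.forall_mem_pair, Sym2.forall_mem_pair]
  rw [isPolyDiag_mk_iff] at hp
  have := a.val_lt; have := b.val_lt
  omega

theorem isTriangulation_liftArc_union (hs : k + ℓ + 1 = m) (hΔ₁ : IsTriangulation (k + 1) Δ₁)
    (hΔ₂ : IsTriangulation (ℓ + 1) Δ₂) :
    IsTriangulation m (liftArc m 0 k Δ₁ ∪ liftArc m k ℓ Δ₂) := by
  have h₁ : 0 + k < m := by omega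
  have h₂ : k + ℓ < m := by omega
  have hcross₁₂ : ∀ p ∈ liftArc m 0 k Δ₁, ∀ q ∈ liftArc m k ℓ Δ₂, ¬ Crosses m p q :=
    fun p hp q hq ↦ not_crosses_of_inArc_of_avoidsArc (inArc_of_mem_liftArc h₁ hp)
      (avoidsArc_of_inArc (inArc_of_mem_liftArc h₂ hq) (by omega))
  have hcross : ∀ p ∈ liftArc m 0 k Δ₁ ∪ liftArc m k ℓ Δ₂,
      ∀ q ∈ liftArc m 0 k Δ₁ ∪ liftArc m k ℓ Δ₂, ¬ Crosses m p q := by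
    rintro p (hp | hp) q (hq | hq)
    · exact not_crosses_of_mem_liftArc h₁ hΔ₁.2.1 hp hq
    · exact hcross₁₂ p hp q hq
    · exact fun hpq ↦ hcross₁₂ q hq p hp hpq.symm
    · exact not_crosses_of_mem_liftArc h₂ hΔ₂.2.1 hp hq
  refine isTriangulation_iff.mpr ⟨?_, hcross, fun q hq hfree ↦ ?_⟩
  · rintro p (hp | hp)
    exacts [isPolyDiag_of_mem_liftArc h₁ hΔ₁.1 hp, isPolyDiag_of_mem_liftArc h₂ hΔ₂.1 hp]
  have hfree' : ∀ p ∈ liftArc m 0 k Δ₁ ∪ liftArc m k ℓ Δ₂, ¬ Crosses m p q :=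
    fun p hp hpq ↦ hfree p hp hpq.symm
  rcases inArc_or_inArc hs hq
      (not_crosses_of_imp_mem (fun hc ↦ Or.inl (Or.inr ⟨rfl, hc⟩)) hfree')
      (not_crosses_of_imp_mem (fun hc ↦ Or.inr (Or.inr ⟨rfl, hc⟩)) hfree') with harc | harc
  · exact Or.inl (mem_liftArc_of_forall_not_crosses h₁ hΔ₁ hq harc fun p hp ↦ hfree p (Or.inl hp))
  · exact Or.inr (mem_liftArc_of_forall_not_crosses h₂ hΔ₂ hq harc fun p hp ↦ hfree p (Or.inr hp))

theorem restrictArc_left_liftArc_union (hs : k + ℓ + 1 = m)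
    (hΔ₁ : ∀ q ∈ Δ₁, IsPolyDiag (k + 1) q) :
    restrictArc m 0 k (liftArc m 0 k Δ₁ ∪ liftArc m k ℓ Δ₂) = Δ₁ :=
  restrictArc_liftArc_union (by omega) hΔ₁ fun _ hp hdiag harc ↦
    not_isPolyDiag_of_inArc_of_inArc (zero_add k).le harc (inArc_of_mem_liftArc (by omega) hp) hdiag

theorem restrictArc_right_liftArc_union (hs : k + ℓ + 1 = m)
    (hΔ₂ : ∀ q ∈ Δ₂, IsPolyDiag (ℓ + 1) q) :
    restrictArc m k ℓ (liftArc m 0 k Δ₁ ∪ liftArc m k ℓ Δ₂) = Δ₂ := by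
  rw [Set.union_comm]
  exact restrictArc_liftArc_union (by omega) hΔ₂ fun _ hp hdiag harc ↦
    not_isPolyDiag_of_inArc_of_inArc (zero_add k).le (inArc_of_mem_liftArc (by omega) hp) harc hdiag

theorem IsApex.liftArc_union_eq (hapex : IsApex m k ℓ Δ) (hs : k + ℓ + 1 = m)
    (hΔ : IsTriangulation m Δ) :
    liftArc m 0 k (restrictArc m 0 k Δ) ∪ liftArc m k ℓ (restrictArc m k ℓ Δ) = Δ := by
  obtain ⟨hdiag, hcross, -⟩ := isTriangulation_iff.mp hΔ
  refine (Set.union_subset (liftArc_restrictArc_subset hapex.1)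
    (liftArc_restrictArc_subset hapex.2)).antisymm fun p hp ↦ ?_
  have hfree : ∀ p' ∈ Δ, ¬ Crosses m p' p := fun p' hp' ↦ hcross p' hp' p hp
  rcases inArc_or_inArc hs (hdiag p hp) (not_crosses_of_imp_mem hapex.1 hfree)
      (not_crosses_of_imp_mem hapex.2 hfree) with harc | harc
  · exact Or.inl (mem_liftArc_restrictArc (by omega) hp (hdiag p hp) harc)
  · exact Or.inr (mem_liftArc_restrictArc (by omega) hp (hdiag p hp) harc)

theorem IsApex.isTriangulation_restrictArc_left (hapex : IsApex m k ℓ Δ)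
    (hs : k + ℓ + 1 = m) (hΔ : IsTriangulation m Δ) :
    IsTriangulation (k + 1) (restrictArc m 0 k Δ) :=
  isTriangulation_restrictArc (by omega) hΔ fun p hp ↦
    not_crosses_of_imp_mem hapex.1 fun p' hp' ↦ hΔ.2.1 p' hp' p hp

theorem IsApex.isTriangulation_restrictArc_right (hapex : IsApex m k ℓ Δ)
    (hs : k + ℓ + 1 = m) (hΔ : IsTriangulation m Δ) :
    IsTriangulation (ℓ + 1) (restrictArc m k ℓ Δ) :=
  isTriangulation_restrictArc (by omega) hΔ fun p hp ↦
    not_crosses_of_imp_mem hapex.2 fun p' hp' ↦ hΔ.2.1 p' hp' p hp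

theorem exists_isApex (hm : 3 ≤ m) (hΔ : IsTriangulation m Δ) :
    ∃ k ℓ, 1 ≤ k ∧ 1 ≤ ℓ ∧ k + ℓ + 1 = m ∧ IsApex m k ℓ Δ := by
  classical
  obtain ⟨-, hcross, hmax⟩ := isTriangulation_iff.mp hΔ
  have hP : ∃ j, 1 ≤ j ∧ j + 2 ≤ m ∧
      (IsPolyDiag m (arcChord m j (m - 1 - j)) → arcChord m j (m - 1 - j) ∈ Δ) :=
    ⟨m - 2, by omega, by omega, fun hc ↦ absurd ((isPolyDiag_arcChord_iff (by omega)).mp hc)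
      (by omega)⟩
  obtain ⟨hk, hkm, hc₂⟩ := Nat.find_spec hP
  set k := Nat.find hP
  refine ⟨k, m - 1 - k, hk, by omega, by omega, fun hc₁ ↦ hmax _ hc₁ fun p hp hcr ↦ ?_, hc₂⟩
  -- A diagonal `s(c, d)` with `0 < c < k < d` either crosses the chord `s(k, m - 1)`, or it is
  -- the chord `s(c, m - 1)`, against the minimality of `k`.
  have key : ∀ c d : ZMod m, s(c, d) ∈ Δ → 0 < c.val → c.val < k → k < d.val → False := by
    intro c d hcd h0c hck hkd
    have := d.val_lt
    rcases Nat.lt_or_ge d.val (m - 1) with hd | hd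
    · obtain ⟨a, b, hab, ha, hb⟩ := arcChord_eq_mk (show k + (m - 1 - k) < m by omega)
      refine hcross _ hcd _ (hc₂ ((isPolyDiag_arcChord_iff (by omega)).mpr ⟨by omega, by omega⟩)) ?_
      rw [hab, crosses_mk_iff]
      simp only [btw_iff]
      omega
    · refine Nat.find_min hP hck ⟨by omega, by omega, fun _ ↦ ?_⟩
      obtain ⟨a, b, hab, ha, hb⟩ :=
        arcChord_eq_mk (show c.val + (m - 1 - c.val) < m by omega)
      rwa [hab, ZMod.val_injective m ha, ZMod.val_injective m (show b.val = d.val by omega)]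
  induction p using Sym2.ind with | _ c d =>
  obtain ⟨a, b, hab, ha, hb⟩ := arcChord_eq_mk (show 0 + k < m by omega)
  rw [hab, crosses_mk_iff] at hcr
  simp only [btw_iff] at hcr
  rcases (by omega : (0 < c.val ∧ c.val < k ∧ k < d.val) ∨ (0 < d.val ∧ d.val < k ∧ k < c.val))
    with ⟨h₁, h₂, h₃⟩ | ⟨h₁, h₂, h₃⟩
  · exact key c d hp h₁ h₂ h₃
  · exact key d c (Sym2.eq_swap ▸ hp) h₁ h₂ h₃

theorem IsApex.unique (hcross : ∀ p ∈ Δ, ∀ q ∈ Δ, ¬ Crosses m p q) {k' ℓ' : ℕ}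
    (hs : k + ℓ + 1 = m) (hs' : k' + ℓ' + 1 = m) (hk : 1 ≤ k) (hl : 1 ≤ ℓ) (hk' : 1 ≤ k')
    (hl' : 1 ≤ ℓ') (h : IsApex m k ℓ Δ) (h' : IsApex m k' ℓ' Δ) : k = k' := by
  -- Two apexes `k' < k` would give the crossing chords `s(0, k)` and `s(k', m - 1)`.
  have key : ∀ {k ℓ k' ℓ' : ℕ}, k + ℓ + 1 = m → k' + ℓ' + 1 = m → 1 ≤ k' → 1 ≤ ℓ → k' < k →
      IsApex m k ℓ Δ → IsApex m k' ℓ' Δ → False := by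
    intro k ℓ k' ℓ' hs hs' hk' hl hlt h h'
    obtain ⟨a, b, hab, ha, hb⟩ := arcChord_eq_mk (show 0 + k < m by omega)
    obtain ⟨c, d, hcd, hc, hd⟩ := arcChord_eq_mk (show k' + ℓ' < m by omega)
    have h₁ := h.1 ((isPolyDiag_arcChord_iff (by omega)).mpr ⟨by omega, by omega⟩)
    have h₂ := h'.2 ((isPolyDiag_arcChord_iff (by omega)).mpr ⟨by omega, by omega⟩)
    rw [hab] at h₁
    rw [hcd] at h₂
    refine hcross _ h₁ _ h₂ ?_
    rw [crosses_mk_iff]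
    simp only [btw_iff]
    omega
  rcases lt_trichotomy k k' with hlt | heq | hlt
  · exact (key hs' hs hk hl' hlt h' h).elim
  · exact heq
  · exact (key hs hs' hk' hl hlt h h').elim

end Apex

abbrev Triangulation (m : ℕ) := {Δ : Set (Sym2 (ZMod m)) // IsTriangulation m Δ}

theorem card_triangulation_add_three (n : ℕ) :
    Nat.card (Triangulation (n + 3)) = ∑ j : Fin (n + 1),
      Nat.card (Triangulation ((j : ℕ) + 1 + 1)) * Nat.card (Triangulation (n + 1 - j + 1)) := by
  have hs : ∀ j : Fin (n + 1), (j + 1) + (n + 1 - j) + 1 = n + 3 := fun j ↦ by omega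
  let glue
      (x : Σ j : Fin (n + 1), Triangulation ((j : ℕ) + 1 + 1) × Triangulation (n + 1 - j + 1)) :
      Triangulation (n + 3) :=
    ⟨liftArc (n + 3) 0 (x.1 + 1) x.2.1 ∪ liftArc (n + 3) (x.1 + 1) (n + 1 - x.1) x.2.2,
      isTriangulation_liftArc_union (hs x.1) x.2.1.2 x.2.2.2⟩
  have hinj : glue.Injective := by
    rintro ⟨j, Δ₁, Δ₂⟩ ⟨j', Δ₁', Δ₂'⟩ heq
    have hΔ : liftArc (n + 3) 0 (j + 1) Δ₁ ∪ liftArc (n + 3) (j + 1) (n + 1 - j) Δ₂ =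
        liftArc (n + 3) 0 (j' + 1) Δ₁' ∪ liftArc (n + 3) (j' + 1) (n + 1 - j') Δ₂' :=
      congrArg Subtype.val heq
    obtain rfl : j = j' := Fin.ext <| Nat.succ_injective <|
      IsApex.unique (isTriangulation_liftArc_union (hs j) Δ₁.2 Δ₂.2).2.1 (hs j) (hs j')
        (by omega) (by omega) (by omega) (by omega) isApex_liftArc_union
        (by rw [hΔ]; exact isApex_liftArc_union)
    have h₁ := congrArg (restrictArc (n + 3) 0 (j + 1)) hΔ
    have h₂ := congrArg (restrictArc (n + 3) (j + 1) (n + 1 - j)) hΔ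
    rw [restrictArc_left_liftArc_union (hs j) Δ₁.2.1,
      restrictArc_left_liftArc_union (hs j) Δ₁'.2.1] at h₁
    rw [restrictArc_right_liftArc_union (hs j) Δ₂.2.1,
      restrictArc_right_liftArc_union (hs j) Δ₂'.2.1] at h₂
    rw [Subtype.ext h₁, Subtype.ext h₂]
  have hsurj : glue.Surjective := by
    rintro ⟨Δ, hΔ⟩
    obtain ⟨k, ℓ, hk, hl, hs', hapex⟩ := exists_isApex (by omega) hΔ
    obtain ⟨j, rfl, rfl⟩ : ∃ j : Fin (n + 1), k = j + 1 ∧ ℓ = n + 1 - j :=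
      ⟨⟨k - 1, by omega⟩, by simp only; omega, by simp only; omega⟩
    exact ⟨⟨j, ⟨_, hapex.isTriangulation_restrictArc_left hs' hΔ⟩,
      ⟨_, hapex.isTriangulation_restrictArc_right hs' hΔ⟩⟩,
      Subtype.ext (hapex.liftArc_union_eq hs' hΔ)⟩
  rw [← Nat.card_eq_of_bijective glue ⟨hinj, hsurj⟩, Nat.card_sigma]
  simp only [Nat.card_prod]

theorem card_triangulation_two : Nat.card (Triangulation 2) = 1 := by
  have hnodiag : ∀ p, ¬ IsPolyDiag 2 p := fun p ↦ by
    induction p using Sym2.ind with | _ a b =>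
    have := a.val_lt; have := b.val_lt
    rw [isPolyDiag_mk_iff]
    omega
  have hempty : ∀ Δ : Triangulation 2, Δ.1 = ∅ :=
    fun Δ ↦ Set.eq_empty_of_forall_notMem fun p hp ↦ hnodiag p (Δ.2.1 p hp)
  have hΔ : IsTriangulation 2 ∅ :=
    isTriangulation_iff.mpr ⟨by simp, by simp, fun q hq ↦ absurd hq (hnodiag q)⟩
  exact Nat.card_eq_one_iff_unique.mpr
    ⟨⟨fun Δ Δ' ↦ Subtype.ext ((hempty Δ).trans (hempty Δ').symm)⟩, ⟨⟨∅, hΔ⟩⟩⟩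

theorem card_triangulation_eq_catalan (n : ℕ) : Nat.card (Triangulation (n + 2)) = catalan n := by
  induction n using Nat.strong_induction_on with | _ n ih =>
  rcases n with _ | n
  · rw [card_triangulation_two, catalan_zero]
  · rw [card_triangulation_add_three, catalan_succ]
    refine Finset.sum_congr rfl fun j _ ↦ ?_
    rw [ih j (by omega), show n + 1 - j + 1 = n - j + 2 by omega, ih (n - j) (by omega)]

theorem catalanC_eq_catalan (n : ℕ) : catalanC n = catalan n := by
  have hfact : (2 * n).factorial = catalan n * ((n + 1).factorial * n.factorial) := by
    rw [← Nat.choose_mul_factorial_mul_factorial (by omega : n ≤ 2 * n),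
      show 2 * n - n = n by omega, ← Nat.centralBinom_eq_two_mul_choose,
      ← succ_mul_catalan_eq_centralBinom, Nat.factorial_succ]
    ring
  rw [catalanC, hfact, Nat.mul_div_cancel _ (by positivity)]

/-- The number of triangulations of a convex polygon with `n+2` vertices is the `n`-th
Catalan number `(2n)!/((n+1)!·n!)`. -/
theorem card_triangulations (n : ℕ) :
    Nat.card {Δ : Set (Sym2 (ZMod (n + 2))) // IsTriangulation (n + 2) Δ} = catalanC n := by
  rw [catalanC_eq_catalan]
  exact card_triangulation_eq_catalan n

end CTA
end

section
/- For a triangulation Δ of a convex (n+3)-gon with n ≥ 3 and a diagonal α of Δ close to the border, the quiver of the triangulation Δ/α of the (n+2)-gon obtained by factoring out α equals the quiver obtained from Q_Δ by deleting the vertex v_α and all incident arrows. -/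
namespace CTA

/-! A diagonal close to the border cuts off an ear: no other diagonal of `Δ` ends at the
cut-off vertex `v`, since it would cross `cutDiag v`. Deleting `v` therefore relabels the
endpoints of all remaining diagonals by an order-preserving injection, which preserves
betweenness and hence the orientation of arrows. The triangles of `Δ/α` are those of `Δ` other
than the ear: the only new border edge is the image of `cutDiag v`. -/

theorem _root_.Sym2.map_injOn {α β : Type*} {f : α → β} {s : Set α} (hf : Set.InjOn f s) :
    Set.InjOn (Sym2.map f) {z | ∀ a ∈ z, a ∈ s} := by
  intro z hz w hw hzw
  induction z using Sym2.ind with | h a b => ?_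
  induction w using Sym2.ind with | h c d => ?_
  have hs : ∀ {x y : α}, (∀ a ∈ s(x, y), a ∈ s) → x ∈ s ∧ y ∈ s := fun h =>
    ⟨h _ (Sym2.mem_mk_left _ _), h _ (Sym2.mem_mk_right _ _)⟩
  obtain ⟨ha, hb⟩ := hs hz
  obtain ⟨hc, hd⟩ := hs hw
  rcases Sym2.eq_iff.mp hzw with ⟨hac, hbd⟩ | ⟨had, hbc⟩
  · rw [hf ha hc hac, hf hb hd hbd]
  · rw [hf ha hd had, hf hb hc hbc, Sym2.eq_swap]

theorem _root_.Sym2.exists_eq_mk_of_map_eq {α β : Type*} {f : α → β} {z : Sym2 α}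
    {a' b' : β} (h : z.map f = s(a', b')) : ∃ a b, z = s(a, b) ∧ f a = a' ∧ f b = b' := by
  induction z using Sym2.ind with | h a b => ?_
  rcases Sym2.eq_iff.mp h with ⟨ha, hb⟩ | ⟨ha, hb⟩
  · exact ⟨a, b, rfl, ha, hb⟩
  · exact ⟨b, a, Sym2.eq_swap, hb, ha⟩

theorem exists_mk_eq_mk_add_one_iff {R : Type*} [Add R] [One R] {x y : R} :
    (∃ a, s(x, y) = s(a, a + 1)) ↔ y = x + 1 ∨ x = y + 1 := by
  constructor
  · rintro ⟨a, h⟩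
    rcases Sym2.eq_iff.mp h with ⟨rfl, rfl⟩ | ⟨rfl, rfl⟩ <;> simp
  · rintro (rfl | rfl)
    exacts [⟨x, rfl⟩, ⟨y, Sym2.eq_swap⟩]

section ZModVal

variable {M : ℕ}

theorem val_sub_eq_ite_s19 [NeZero M] (a b : ZMod M) :
    (a - b).val = if b.val ≤ a.val then a.val - b.val else M + a.val - b.val := by
  split_ifs with h
  · exact ZMod.val_sub h
  · have hba : (b - a).val = b.val - a.val := ZMod.val_sub (by omega)
    have hne : b - a ≠ 0 := fun h0 => h (sub_eq_zero.mp h0 ▸ le_rfl)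
    have := ZMod.val_lt b
    rw [← neg_sub, ZMod.neg_val, if_neg hne, hba]
    omega

theorem val_add_one_eq_ite (hM : 1 < M) (x : ZMod M) :
    (x + 1).val = if x.val + 1 = M then 0 else x.val + 1 := by
  have : Fact (1 < M) := ⟨hM⟩
  have := ZMod.val_lt x
  rw [ZMod.val_add, ZMod.val_one]
  split_ifs with h
  · rw [h, Nat.mod_self]
  · exact Nat.mod_eq_of_lt (by omega)

theorem val_sub_one_eq_ite (hM : 1 < M) (x : ZMod M) :
    (x - 1).val = if x.val = 0 then M - 1 else x.val - 1 := by
  have : Fact (1 < M) := ⟨hM⟩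
  have := ZMod.val_lt x
  rw [val_sub_eq_ite_s19, ZMod.val_one]
  split_ifs <;> omega

theorem btw_iff_val [NeZero M] (a x b : ZMod M) :
    Btw M a x b ↔ (a.val < x.val ∧ x.val < b.val) ∨ (b.val < a.val ∧ a.val < x.val) ∨
      (x.val < b.val ∧ b.val < a.val) := by
  have := ZMod.val_lt x; have := ZMod.val_lt a; have := ZMod.val_lt b
  unfold Btw
  rw [val_sub_eq_ite_s19, val_sub_eq_ite_s19]
  split_ifs <;> omega

end ZModVal

theorem crosses_cutDiag {M : ℕ} [NeZero M] {v y : ZMod M} (hy : IsPolyDiag M s(v, y)) :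
    Crosses M (cutDiag M v) s(v, y) := by
  obtain ⟨hyv, hvy⟩ := hy v y rfl
  rw [val_sub_eq_ite_s19] at hyv hvy
  have := ZMod.val_lt v; have := ZMod.val_lt y
  have hM : 1 < M := by split_ifs at hyv <;> omega
  refine ⟨v - 1, v + 1, v, y, rfl, rfl, ?_, ?_⟩ <;>
  · rw [btw_iff_val, val_sub_one_eq_ite hM, val_add_one_eq_ite hM]
    split_ifs at hyv hvy ⊢ <;> omega

theorem notMem_of_cutDiag_mem {M : ℕ} [NeZero M] {Δ : Set (Sym2 (ZMod M))} {v : ZMod M}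
    (hdiag : ∀ p ∈ Δ, IsPolyDiag M p) (hnc : ∀ p ∈ Δ, ∀ q ∈ Δ, ¬ Crosses M p q)
    (hv : cutDiag M v ∈ Δ) {p : Sym2 (ZMod M)} (hp : p ∈ Δ) : v ∉ p := by
  intro hvp
  obtain ⟨y, rfl⟩ := Sym2.mem_iff_exists.mp hvp
  exact hnc _ hv _ hp (crosses_cutDiag (hdiag _ hp))

section DelVtx

variable {m : ℕ} {v : ZMod (m + 1)}

theorem val_delVtx {x : ZMod (m + 1)} (hx : x ≠ v) :
    (delVtx m v x).val = if x.val < v.val then x.val else x.val - 1 := by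
  have hxv : x.val ≠ v.val := fun h => hx (ZMod.val_injective _ h)
  have := ZMod.val_lt x; have := ZMod.val_lt v
  unfold delVtx
  split_ifs <;> exact ZMod.val_natCast_of_lt (by omega)

theorem delVtx_val_lt_delVtx_val_iff {x y : ZMod (m + 1)} (hx : x ≠ v) (hy : y ≠ v) :
    (delVtx m v x).val < (delVtx m v y).val ↔ x.val < y.val := by
  have hxv : x.val ≠ v.val := fun h => hx (ZMod.val_injective _ h)
  have hyv : y.val ≠ v.val := fun h => hy (ZMod.val_injective _ h)
  rw [val_delVtx hx, val_delVtx hy]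
  split_ifs <;> omega

theorem delVtx_injOn : Set.InjOn (delVtx m v) {v}ᶜ := by
  intro x hx y hy h
  apply ZMod.val_injective
  apply le_antisymm <;> refine not_lt.mp fun hlt => ?_
  · exact (congrArg ZMod.val h).not_gt ((delVtx_val_lt_delVtx_val_iff hy hx).mpr hlt)
  · exact (congrArg ZMod.val h).not_lt ((delVtx_val_lt_delVtx_val_iff hx hy).mpr hlt)

theorem btw_delVtx_iff [NeZero m] {a x b : ZMod (m + 1)} (ha : a ≠ v) (hx : x ≠ v)
    (hb : b ≠ v) : Btw m (delVtx m v a) (delVtx m v x) (delVtx m v b) ↔ Btw (m + 1) a x b := by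
  rw [btw_iff_val, btw_iff_val, delVtx_val_lt_delVtx_val_iff ha hx,
    delVtx_val_lt_delVtx_val_iff hx hb, delVtx_val_lt_delVtx_val_iff hb ha]

theorem delVtx_eq_delVtx_add_one_iff (hm : 1 < m) {x y : ZMod (m + 1)} (hx : x ≠ v)
    (hy : y ≠ v) :
    delVtx m v y = delVtx m v x + 1 ↔ y = x + 1 ∨ (x = v - 1 ∧ y = v + 1) := by
  have hxv : x.val ≠ v.val := fun h => hx (ZMod.val_injective _ h)
  have hyv : y.val ≠ v.val := fun h => hy (ZMod.val_injective _ h)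
  have := ZMod.val_lt x; have := ZMod.val_lt y; have := ZMod.val_lt v
  have hm' : 1 < m + 1 := by omega
  have : NeZero m := ⟨by omega⟩
  simp only [← (ZMod.val_injective m).eq_iff, ← (ZMod.val_injective (m + 1)).eq_iff]
  rw [val_delVtx hy, val_add_one_eq_ite hm, val_delVtx hx, val_add_one_eq_ite hm',
    val_sub_one_eq_ite hm', val_add_one_eq_ite hm']
  split_ifs <;> omega

end DelVtx

section Contract

variable {m : ℕ} {v : ZMod (m + 1)} {Δ : Set (Sym2 (ZMod (m + 1)))}

theorem mk_delVtx_mem_contract_iff (hvΔ : ∀ p ∈ Δ, v ∉ p) {b c : ZMod (m + 1)}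
    (hb : b ≠ v) (hc : c ≠ v) :
    s(delVtx m v b, delVtx m v c) ∈ contract m v Δ ↔
      s(b, c) ∈ Δ ∧ s(b, c) ≠ cutDiag (m + 1) v := by
  have hbc : ∀ a ∈ s(b, c), a ∈ ({v}ᶜ : Set _) := by
    intro a ha
    rcases Sym2.mem_iff.mp ha with rfl | rfl <;> assumption
  constructor
  · rintro ⟨r, hr, hrbc⟩
    have hr' : ∀ a ∈ r, a ∈ ({v}ᶜ : Set _) := fun a ha hav => hvΔ r hr.1 (hav ▸ ha)
    rwa [← Sym2.map_injOn delVtx_injOn hr' hbc hrbc]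
  · exact fun h => ⟨s(b, c), h, rfl⟩

theorem isEdge_contract_iff (hm : 1 < m) (hv : cutDiag (m + 1) v ∈ Δ)
    (hvΔ : ∀ p ∈ Δ, v ∉ p) {b c : ZMod (m + 1)} (hb : b ≠ v) (hc : c ≠ v) :
    IsEdge m (contract m v Δ) s(delVtx m v b, delVtx m v c) ↔ IsEdge (m + 1) Δ s(b, c) := by
  have hcut : s(b, c) = cutDiag (m + 1) v ↔
      (b = v - 1 ∧ c = v + 1) ∨ (c = v - 1 ∧ b = v + 1) := by
    rw [cutDiag, Sym2.eq_iff]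
    tauto
  unfold IsEdge
  rw [mk_delVtx_mem_contract_iff hvΔ hb hc, exists_mk_eq_mk_add_one_iff,
    exists_mk_eq_mk_add_one_iff, delVtx_eq_delVtx_add_one_iff hm hb hc,
    delVtx_eq_delVtx_add_one_iff hm hc hb]
  by_cases h : s(b, c) = cutDiag (m + 1) v
  · have := hcut.mp h
    rw [h]
    tauto
  · have := mt hcut.mpr h
    tauto

theorem arrow_contract_iff (hm : 1 < m) (hv : cutDiag (m + 1) v ∈ Δ)
    (hvΔ : ∀ p ∈ Δ, v ∉ p) {p q : Sym2 (ZMod (m + 1))} (hp : p ∈ Δ \ {cutDiag (m + 1) v})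
    (hq : q ∈ Δ \ {cutDiag (m + 1) v}) :
    Arrow (m + 1) Δ p q ↔
      Arrow m (contract m v Δ) (p.map (delVtx m v)) (q.map (delVtx m v)) := by
  have : NeZero m := ⟨by omega⟩
  have hne : ∀ {x y}, s(x, y) ∈ Δ → x ≠ v ∧ y ≠ v := fun h =>
    ⟨fun hx => hvΔ _ h (hx ▸ Sym2.mem_mk_left _ _),
      fun hy => hvΔ _ h (hy ▸ Sym2.mem_mk_right _ _)⟩
  constructor
  · rintro ⟨-, -, a, b, c, rfl, rfl, hedge, hbtw⟩
    obtain ⟨ha, hb⟩ := hne hp.1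
    obtain ⟨-, hc⟩ := hne hq.1
    exact ⟨⟨_, hp, rfl⟩, ⟨_, hq, rfl⟩, _, _, _, rfl, rfl,
      (isEdge_contract_iff hm hv hvΔ hb hc).mpr hedge, (btw_delVtx_iff hb hc ha).mpr hbtw⟩
  · rintro ⟨-, -, a', b', c', hpe, hqe, hedge, hbtw⟩
    obtain ⟨a, b, rfl, rfl, rfl⟩ := Sym2.exists_eq_mk_of_map_eq hpe
    obtain ⟨a₁, c, rfl, haa₁, rfl⟩ := Sym2.exists_eq_mk_of_map_eq hqe
    obtain ⟨ha, hb⟩ := hne hp.1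
    obtain ⟨ha₁, hc⟩ := hne hq.1
    obtain rfl : a = a₁ := delVtx_injOn ha ha₁ haa₁.symm
    exact ⟨hp.1, hq.1, a, b, c, rfl, rfl,
      (isEdge_contract_iff hm hv hvΔ hb hc).mp hedge, (btw_delVtx_iff hb hc ha).mp hbtw⟩

end Contract

theorem contract_quiver_general (n : ℕ) (Δ : Set (Sym2 (ZMod (n + 3))))
    (v : ZMod (n + 3)) (hΔ : IsTriangulation (n + 3) Δ) (hv : cutDiag (n + 3) v ∈ Δ) :
    Set.InjOn (Sym2.map (delVtx (n + 2) v)) (Δ \ {cutDiag (n + 3) v}) ∧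
    ∀ p ∈ Δ \ {cutDiag (n + 3) v}, ∀ q ∈ Δ \ {cutDiag (n + 3) v},
      (Arrow (n + 3) Δ p q ↔
        Arrow (n + 2) (contract (n + 2) v Δ)
          (Sym2.map (delVtx (n + 2) v) p) (Sym2.map (delVtx (n + 2) v) q)) := by
  have hvΔ : ∀ p ∈ Δ, v ∉ p := fun p hp => notMem_of_cutDiag_mem hΔ.1 hΔ.2.1 hv hp
  refine ⟨(Sym2.map_injOn delVtx_injOn).mono fun p hp a ha (hav : a = v) =>
    hvΔ p hp.1 (hav ▸ ha), ?_⟩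
  exact fun p hp q hq => arrow_contract_iff (by omega) hv hvΔ hp hq

/-- For `n ≥ 3`, the quiver of the triangulation obtained by factoring out a diagonal close
to the border (cutting off the vertex `v`) is the quiver obtained from `Q_Δ` by deleting
the corresponding vertex and all incident arrows. -/
theorem contract_quiver (n : ℕ) (hn : 3 ≤ n) (Δ : Set (Sym2 (ZMod (n + 3))))
    (v : ZMod (n + 3)) (hΔ : IsTriangulation (n + 3) Δ) (hv : cutDiag (n + 3) v ∈ Δ) :
    Set.InjOn (Sym2.map (delVtx (n + 2) v)) (Δ \ {cutDiag (n + 3) v}) ∧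
    ∀ p ∈ Δ \ {cutDiag (n + 3) v}, ∀ q ∈ Δ \ {cutDiag (n + 3) v},
      (Arrow (n + 3) Δ p q ↔
        Arrow (n + 2) (contract (n + 2) v Δ)
          (Sym2.map (delVtx (n + 2) v) p) (Sym2.map (delVtx (n + 2) v) q)) :=
  contract_quiver_general n Δ v hΔ hv

end CTA
end
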